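/- arXiv:math/0511313 — 2 statements merged into one kernel-verified Lean document; each statement's English description precedes it below -/
import Mathlib

section
/- Let A be an algebra with a term t Mal'cev modulo F and G. For every n ≥ 0 and all reflexive admissible relations R, S on A: R ∘_{n+2} S ⊆ F(R) ∘ (cl(F(R) ∪ F(S)))^n ∘ cl(R ∪ S) ∘ (cl(G(R) ∪ G(S)))^n ∘ G(S•), where R ∘_m S denotes the alternating composition R ∘ S ∘ R ∘ S ⋯ with m−1 occurrences of ∘, T^n denotes the n-fold composition of T with itself (with T^0 the identity relation), and S• = S if n is even, S• = R if n is odd. -/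
structure Signature where
  symbols : Type
  arity : symbols → ℕ

structure UAAlgebra (σ : Signature) where
  carrier : Type
  ops : ∀ s, (Fin (σ.arity s) → carrier) → carrier

namespace Paper

variable {σ : Signature}

/-- Binary relations on the carrier of an algebra. -/
abbrev Rel (A : UAAlgebra σ) := A.carrier → A.carrier → Prop

/-- A relation is admissible (compatible) if it is preserved by all operations,
i.e. it is a subalgebra of `A × A`. -/
def Compatible (A : UAAlgebra σ) (R : Rel A) : Prop :=
  ∀ s (f g : Fin (σ.arity s) → A.carrier),
    (∀ j, R (f j) (g j)) → R (A.ops s f) (A.ops s g)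

/-- Reflexive and admissible. -/
def RAdm (A : UAAlgebra σ) (R : Rel A) : Prop :=
  Reflexive R ∧ Compatible A R

/-- Relational composition. -/
def comp {A : UAAlgebra σ} (R S : Rel A) : Rel A :=
  fun a c => ∃ b, R a b ∧ S b c

/-- `cl A X` : the least compatible relation containing `X`. -/
def cl (A : UAAlgebra σ) (X : Rel A) : Rel A :=
  fun a b => ∀ S : Rel A, Compatible A S → (∀ x y, X x y → S x y) → S a b

/-- The least reflexive compatible relation containing `X`. -/
def clRefl (A : UAAlgebra σ) (X : Rel A) : Rel A :=
  fun a b => ∀ S : Rel A, Reflexive S → Compatible A S → (∀ x y, X x y → S x y) → S a b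

/-- `altComp R S n` is `R ∘ₙ S`, the alternating composition
`R ∘ S ∘ R ∘ ⋯` with `n` factors (`n - 1` occurrences of `∘`);
by convention `R ∘₀ S` is the identity relation. -/
def altComp {A : UAAlgebra σ} (R S : Rel A) : ℕ → Rel A
  | 0 => Eq
  | n + 1 => comp R (altComp S R n)

/-- `relPow R n = Rⁿ`, with `R⁰` the identity relation. -/
def relPow {A : UAAlgebra σ} (R : Rel A) : ℕ → Rel A
  | 0 => Eq
  | n + 1 => comp R (relPow R n)

/-- The join `R + S = ⋃ₙ R ∘ₙ S`. -/
def join {A : UAAlgebra σ} (R S : Rel A) : Rel A :=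
  fun a b => ∃ n, altComp R S n a b

/-- Converse relation `R⁻`. -/
def conv {A : UAAlgebra σ} (R : Rel A) : Rel A :=
  fun a b => R b a

/-- Composition of a finite list of relations (empty list gives the identity). -/
def compList {A : UAAlgebra σ} : List (Rel A) → Rel A
  | [] => Eq
  | r :: l => comp r (compList l)

/-- Join of a family of relations: the union of all finite compositions of members. -/
def joinFam {A : UAAlgebra σ} {ι : Type} (R : ι → Rel A) : Rel A :=
  fun a b => ∃ l : List ι, compList (l.map R) a b

/-- The smallest congruence containing `X`. -/
def cg (A : UAAlgebra σ) (X : Rel A) : Rel A :=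
  fun a b => ∀ S : Rel A, Equivalence S → Compatible A S →
    (∀ x y, X x y → S x y) → S a b

/-- Terms of the signature `σ` in `n` variables. -/
inductive Term (σ : Signature) (n : ℕ) : Type
  | var : Fin n → Term σ n
  | op : ∀ s, (Fin (σ.arity s) → Term σ n) → Term σ n

/-- Evaluation of a term in an algebra under an environment. -/
def Term.eval {n : ℕ} (A : UAAlgebra σ) (env : Fin n → A.carrier) : Term σ n → A.carrier
  | .var k => env k
  | .op s args => A.ops s fun j => (args j).eval A env

/-- The ternary term operation induced by a ternary term. -/
def tApp (A : UAAlgebra σ) (t : Term σ 3) (a b c : A.carrier) : A.carrier :=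
  t.eval A ![a, b, c]

/-- `t` is Mal'cev modulo `F` and `G`: whenever `a R b` with `R` reflexive admissible,
`a F(R) t(a,b,b)` and `t(a,a,b) G(R) b`. -/
def MalcevMod (A : UAAlgebra σ) (F G : Rel A → Rel A) (t : Term σ 3) : Prop :=
  ∀ R : Rel A, RAdm A R → ∀ a b : A.carrier, R a b →
    F R a (tApp A t a b b) ∧ G R (tApp A t a a b) b

end Paper
/-!
Write `Φ = cl(F(R) ∪ F(S))`, `M = cl(R ∪ S)`, `Γ = cl(G(R) ∪ G(S))` and `Wₙ = Φⁿ ∘ M ∘ Γⁿ`.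
All of these are symmetric in `R, S` and compatible, and `Wₙ ⊆ Wₙ₊₁` by reflexivity.
By induction on `n`, every chain `R ∘ₖ S` or `S ∘ₖ R` with `k ≤ n + 1` lies in `Wₙ`.
Given `a R a₁ (S ∘ₙ R) b L c`, with `L = S•` the last factor of `R ∘_{n+2} S`, the pairs
`(a, b)`, `(a₁, b)`, `(a₁, c)` are such chains, so `t(a, a₁, a₁) Wₙ t(b, b, c)`; and
`a F(R) t(a, a₁, a₁)`, `t(b, b, c) G(L) c` because `t` is Mal'cev modulo `F` and `G`.
Finally, `F(R) ∘ Wₙ ∘ G(L) ⊆ Wₙ₊₁`, which carries the induction.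
-/

namespace Paper

variable {σ : Signature} {A : UAAlgebra σ}

section Compatible

theorem compatible_eq : Compatible A Eq := by
  intro s f g h
  rw [funext h]

theorem Compatible.comp {R S : Rel A} (hR : Compatible A R) (hS : Compatible A S) :
    Compatible A (comp R S) := by
  intro s f g h
  choose m hfm hmg using h
  exact ⟨A.ops s m, hR s f m hfm, hS s m g hmg⟩

theorem Compatible.relPow {R : Rel A} (hR : Compatible A R) (n : ℕ) :
    Compatible A (relPow R n) := by
  induction n with
  | zero => exact compatible_eq
  | succ n ih => exact hR.comp ih

theorem compatible_cl (X : Rel A) : Compatible A (cl A X) :=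
  fun s f g h T hT hXT => hT s f g fun j => h j T hT hXT

theorem cl_of_rel {X : Rel A} {a b : A.carrier} (h : X a b) : cl A X a b :=
  fun _ _ hXT => hXT a b h

theorem Compatible.term_eval {R : Rel A} (hR : Compatible A R) {k : ℕ} (p : Term σ k)
    {e e' : Fin k → A.carrier} (h : ∀ i, R (e i) (e' i)) : R (p.eval A e) (p.eval A e') := by
  induction p with
  | var i => exact h i
  | op s args ih => exact hR s _ _ ih

theorem Compatible.tApp {R : Rel A} (hR : Compatible A R) (t : Term σ 3)
    {x x' y y' z z' : A.carrier} (hx : R x x') (hy : R y y') (hz : R z z') :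
    R (tApp A t x y z) (tApp A t x' y' z') :=
  hR.term_eval t fun i => by fin_cases i <;> assumption

end Compatible

section Chains

theorem relPow_succ_of_reflexive {R : Rel A} (hR : Reflexive R) {n : ℕ} {a b : A.carrier}
    (h : relPow R n a b) : relPow R (n + 1) a b :=
  ⟨a, hR a, h⟩

theorem relPow_succ_of_relPow_of_rel {R : Rel A} {n : ℕ} {a b c : A.carrier}
    (hab : relPow R n a b) (hbc : R b c) : relPow R (n + 1) a c := by
  induction n generalizing a with
  | zero => cases hab; exact ⟨c, hbc, rfl⟩
  | succ n ih =>
    obtain ⟨d, had, hdb⟩ := hab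
    exact ⟨d, had, ih hdb⟩

theorem exists_altComp_of_altComp_succ {R S : Rel A} {n : ℕ} {a c : A.carrier}
    (h : altComp R S (n + 1) a c) :
    ∃ b, altComp R S n a b ∧ (if n % 2 = 0 then R else S) b c := by
  induction n generalizing R S a with
  | zero =>
    obtain ⟨b, hab, rfl⟩ := h
    exact ⟨a, rfl, hab⟩
  | succ n ih =>
    obtain ⟨d, had, hdc⟩ := h
    obtain ⟨b, hdb, hbc⟩ := ih hdc
    refine ⟨b, ⟨d, had, hdb⟩, ?_⟩
    split_ifs at hbc ⊢ <;> first | exact hbc | omega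

end Chains

section Malcev

variable (A) in
def clUnion (X Y : Rel A) : Rel A :=
  cl A fun u v => X u v ∨ Y u v

theorem clUnion_comm (X Y : Rel A) : clUnion A X Y = clUnion A Y X := by
  simp only [clUnion, or_comm]

theorem clUnion_of_left {X Y : Rel A} {a b : A.carrier} (h : X a b) : clUnion A X Y a b :=
  cl_of_rel (Or.inl h)

theorem clUnion_of_right {X Y : Rel A} {a b : A.carrier} (h : Y a b) : clUnion A X Y a b :=
  cl_of_rel (Or.inr h)

variable (A) in
def sandwich (F G : Rel A → Rel A) (R S : Rel A) (n : ℕ) : Rel A :=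
  comp (relPow (clUnion A (F R) (F S)) n)
    (comp (clUnion A R S) (relPow (clUnion A (G R) (G S)) n))

variable {F G : Rel A → Rel A}

theorem sandwich_comm (R S : Rel A) (n : ℕ) : sandwich A F G S R n = sandwich A F G R S n := by
  simp only [sandwich, clUnion_comm S R, clUnion_comm (F S), clUnion_comm (G S)]

theorem compatible_sandwich (R S : Rel A) (n : ℕ) : Compatible A (sandwich A F G R S n) :=
  ((compatible_cl _).relPow n).comp ((compatible_cl _).comp ((compatible_cl _).relPow n))

theorem sandwich_succ_of_sandwich {R S : Rel A} (hFR : Reflexive (F R)) (hGR : Reflexive (G R))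
    {n : ℕ} {a b : A.carrier} (h : sandwich A F G R S n a b) :
    sandwich A F G R S (n + 1) a b := by
  obtain ⟨p, hap, q, hpq, hqb⟩ := h
  exact ⟨p, relPow_succ_of_reflexive (fun x => clUnion_of_left (hFR x)) hap, q, hpq,
    relPow_succ_of_reflexive (fun x => clUnion_of_left (hGR x)) hqb⟩

theorem sandwich_succ_of_comp {R S L : Rel A} (hL : L = R ∨ L = S) {n : ℕ}
    {a x y c : A.carrier} (hax : F R a x) (hxy : sandwich A F G R S n x y) (hyc : G L y c) :
    sandwich A F G R S (n + 1) a c := by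
  obtain ⟨p, hxp, q, hpq, hqy⟩ := hxy
  refine ⟨p, ⟨x, clUnion_of_left hax, hxp⟩, q, hpq, relPow_succ_of_relPow_of_rel hqy ?_⟩
  rcases hL with rfl | rfl
  · exact clUnion_of_left hyc
  · exact clUnion_of_right hyc

theorem exists_malcev_decomposition (t : Term σ 3) (ht : MalcevMod A F G t) {n : ℕ}
    (hW : ∀ R S, RAdm A R → RAdm A S → ∀ k ≤ n + 1, ∀ a b,
      altComp R S k a b → sandwich A F G R S n a b)
    {R S : Rel A} (hR : RAdm A R) (hS : RAdm A S) {a c : A.carrier}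
    (h : altComp R S (n + 2) a c) :
    ∃ x y, F R a x ∧ sandwich A F G R S n x y ∧ G (if n % 2 = 0 then S else R) y c := by
  obtain ⟨a₁, haa₁, ha₁c⟩ := h
  obtain ⟨b, ha₁b, hbc⟩ := exists_altComp_of_altComp_succ ha₁c
  have hL : RAdm A (if n % 2 = 0 then S else R) := by split <;> assumption
  have hab : sandwich A F G R S n a b := hW R S hR hS (n + 1) le_rfl a b ⟨a₁, haa₁, ha₁b⟩
  have ha₁b' : sandwich A F G R S n a₁ b :=
    sandwich_comm R S n ▸ hW S R hS hR n n.le_succ a₁ b ha₁b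
  have ha₁c' : sandwich A F G R S n a₁ c :=
    sandwich_comm R S n ▸ hW S R hS hR (n + 1) le_rfl a₁ c ha₁c
  exact ⟨_, _, (ht R hR a a₁ haa₁).1, (compatible_sandwich R S n).tApp t hab ha₁b' ha₁c',
    (ht _ hL b c hbc).2⟩

theorem sandwich_of_altComp (t : Term σ 3) (ht : MalcevMod A F G t)
    (hF : ∀ R, RAdm A R → Reflexive (F R)) (hG : ∀ R, RAdm A R → Reflexive (G R))
    (n : ℕ) {R S : Rel A} (hR : RAdm A R) (hS : RAdm A S) {k : ℕ}
    (hk : k ≤ n + 1) {a b : A.carrier} (h : altComp R S k a b) :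
    sandwich A F G R S n a b := by
  induction n generalizing R S k a b with
  | zero =>
    interval_cases k
    · cases h
      exact ⟨a, rfl, a, clUnion_of_left (hR.1 a), rfl⟩
    · obtain ⟨c, hac, rfl⟩ := h
      exact ⟨a, rfl, c, clUnion_of_left hac, rfl⟩
  | succ n ih =>
    rcases Nat.lt_or_eq_of_le hk with hk | rfl
    · exact sandwich_succ_of_sandwich (hF R hR) (hG R hR) (ih hR hS (by omega) h)
    · obtain ⟨x, y, hax, hxy, hyc⟩ :=
        exists_malcev_decomposition t ht (fun R S hR hS _ hk _ _ => ih hR hS hk) hR hS h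
      exact sandwich_succ_of_comp (by split <;> simp) hax hxy hyc

end Malcev

end Paper

open Paper

/-- Theorem 1(iv): for every `n ≥ 0`,
`R ∘_{n+2} S ⊆ F(R) ∘ (cl(F(R) ∪ F(S)))ⁿ ∘ cl(R ∪ S) ∘ (cl(G(R) ∪ G(S)))ⁿ ∘ G(S•)`,
where `S• = S` if `n` is even and `S• = R` if `n` is odd. -/
theorem stmt3 {σ : Signature} (A : UAAlgebra σ) (F G : Rel A → Rel A)
    (hF : ∀ R, RAdm A R → RAdm A (F R)) (hG : ∀ R, RAdm A R → RAdm A (G R))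
    (t : Term σ 3) (ht : MalcevMod A F G t)
    (n : ℕ) (R S : Rel A) (hR : RAdm A R) (hS : RAdm A S) :
    ∀ a c, altComp R S (n + 2) a c →
      comp (F R)
        (comp (relPow (cl A (fun u v => F R u v ∨ F S u v)) n)
          (comp (cl A (fun u v => R u v ∨ S u v))
            (comp (relPow (cl A (fun u v => G R u v ∨ G S u v)) n)
              (G (if n % 2 = 0 then S else R))))) a c := by
  intro a c h
  have hF' : ∀ R, RAdm A R → Reflexive (F R) := fun R hR => (hF R hR).1
  have hG' : ∀ R, RAdm A R → Reflexive (G R) := fun R hR => (hG R hR).1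
  obtain ⟨x, y, hax, ⟨p, hxp, q, hpq, hqy⟩, hyc⟩ :=
    exists_malcev_decomposition t ht
      (fun _ _ hR hS _ hk _ _ => sandwich_of_altComp t ht hF' hG' n hR hS hk) hR hS h
  exact ⟨x, hax, p, hxp, q, hpq, y, hqy, hyc⟩
end

section
/- Let V be a variety and F, G monotone global operators on V for reflexive admissible relations satisfying the homomorphism property. Then the following are equivalent: (1) V has a single ternary term Mal'cev modulo F_A and G_A for every A ∈ V; (2) every A ∈ V has a (possibly different) term Mal'cev modulo F_A and G_A; (3) for every A ∈ V and every reflexive admissible R on A, R ∘ R ⊆ F_A(R) ∘ R ∘ G_A(R); (4) for every A ∈ V and every reflexive admissible R on A, R ⊆ F_A(R) ∘ R⁻ ∘ G_A(R). -/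
open Paper

namespace Paper

variable {σ : Signature}

/-- A set of equations (each in some number of variables). -/
abbrev EqTheory (σ : Signature) := Set (Σ n : ℕ, Term σ n × Term σ n)

/-- `A` belongs to the variety axiomatized by `E`. -/
def Satisfies (A : UAAlgebra σ) (E : EqTheory σ) : Prop :=
  ∀ e ∈ E, ∀ env : Fin e.1 → A.carrier, e.2.1.eval A env = e.2.2.eval A env

/-- Homomorphisms of algebras. -/
structure Hom (A B : UAAlgebra σ) where
  toFun : A.carrier → B.carrier
  map_ops : ∀ s f, toFun (A.ops s f) = B.ops s (toFun ∘ f)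

/-- `φ(R)`: the smallest reflexive compatible relation on the codomain containing
`{(φ b, φ c) : b R c}`. -/
def mapRel {A B : UAAlgebra σ} (φ : Hom A B) (R : Rel A) : Rel B :=
  clRefl B (fun x y => ∃ a b, R a b ∧ φ.toFun a = x ∧ φ.toFun b = y)

/-- `X` with distinguished elements `x, y` is the free algebra on two generators in
the variety of `E`. -/
def IsFree2 (E : EqTheory σ) (X : UAAlgebra σ) (x y : X.carrier) : Prop :=
  Satisfies X E ∧ ∀ A : UAAlgebra σ, Satisfies A E → ∀ a b : A.carrier,
    ∃! φ : Hom X A, φ.toFun x = a ∧ φ.toFun y = b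

/-- `X` with `x, y, z` is the free algebra on three generators in the variety of `E`. -/
def IsFree3 (E : EqTheory σ) (X : UAAlgebra σ) (x y z : X.carrier) : Prop :=
  Satisfies X E ∧ ∀ A : UAAlgebra σ, Satisfies A E → ∀ a b c : A.carrier,
    ∃! φ : Hom X A, φ.toFun x = a ∧ φ.toFun y = b ∧ φ.toFun z = c

/-- A global operator for reflexive admissible relations on the variety of `E`,
mapping reflexive admissible relations to reflexive admissible relations. -/
def GlobalOp (E : EqTheory σ)
    (F : ∀ A : UAAlgebra σ, Satisfies A E → Rel A → Rel A) : Prop :=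
  ∀ (A : UAAlgebra σ) (hA : Satisfies A E) (R : Rel A), RAdm A R → RAdm A (F A hA R)

/-- Monotonicity of a global operator. -/
def MonotoneOp (E : EqTheory σ)
    (F : ∀ A : UAAlgebra σ, Satisfies A E → Rel A → Rel A) : Prop :=
  ∀ (A : UAAlgebra σ) (hA : Satisfies A E) (R S : Rel A), RAdm A R → RAdm A S →
    (∀ a b, R a b → S a b) → ∀ a b, F A hA R a b → F A hA S a b

/-- The homomorphism property: `φ(F_B(R)) ⊆ F_A(φ(R))`. -/
def HomProp (E : EqTheory σ)
    (F : ∀ A : UAAlgebra σ, Satisfies A E → Rel A → Rel A) : Prop :=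
  ∀ (B A : UAAlgebra σ) (hB : Satisfies B E) (hA : Satisfies A E) (φ : Hom B A)
    (R : Rel B), RAdm B R →
    ∀ b c, F B hB R b c → F A hA (mapRel φ R) (φ.toFun b) (φ.toFun c)

end Paper

/-!
Evaluating a Mal'cev term along the given pairs yields (3) and (4). Conversely, apply (3) to
the reflexive admissible relation `R₀` generated by `(x, y), (y, z)` in the free algebra on
`x, y, z`. It is the set of pairs `(w(x,y,z,x,y), w(x,y,z,y,z))` for 5-ary terms `w`, so the chain
`x F(R₀) u R₀ v G(R₀) z` has `u = w(x,y,z,x,y)`, `v = w(x,y,z,y,z)`, and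
`t(x,y,z) = w(x,y,z,x,z)` is Mal'cev modulo `F` and `G`: monotonicity and the homomorphism
property carry `F(R₀)` and `G(R₀)` to `F(R)` and `G(R)` along the homomorphisms sending
`x, y, z` to `a, b, b` and to `a, a, b`. For (4) the same works in the free algebra on `x, y`
with `R₀` generated by `(x, y)`, where `v R₀ u` gives `v = w(x,y,x)`, `u = w(x,y,y)` and
`t(x,y,z) = w(x,z,y)`.
-/

namespace Paper

variable {σ : Signature}

def Term.rename {m k : ℕ} (f : Fin m → Fin k) : Term σ m → Term σ k
  | .var i => .var (f i)
  | .op s args => .op s fun j => (args j).rename f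

theorem Term.eval_rename {m k : ℕ} (f : Fin m → Fin k) (t : Term σ m) (A : UAAlgebra σ)
    (env : Fin k → A.carrier) :
    (t.rename f).eval A env = t.eval A (fun i => env (f i)) := by
  induction t with
  | var i => rfl
  | op s args ih => exact congrArg (A.ops s) (funext ih)

theorem Hom.map_eval {A B : UAAlgebra σ} (φ : Hom A B) {m : ℕ} (t : Term σ m)
    (env : Fin m → A.carrier) :
    φ.toFun (t.eval A env) = t.eval B (fun i => φ.toFun (env i)) := by
  induction t with
  | var i => rfl
  | op s args ih => exact (φ.map_ops s _).trans (congrArg (B.ops s) (funext ih))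

theorem Compatible.eval {A : UAAlgebra σ} {R : Rel A} (hR : Compatible A R) {m : ℕ}
    (t : Term σ m) (e₁ e₂ : Fin m → A.carrier) (h : ∀ j, R (e₁ j) (e₂ j)) :
    R (t.eval A e₁) (t.eval A e₂) := by
  induction t with
  | var i => exact h i
  | op s args ih => exact hR s _ _ ih

theorem MalcevMod.comp_le {A : UAAlgebra σ} {F G : Rel A → Rel A} {t : Term σ 3}
    (ht : MalcevMod A F G t) {R : Rel A} (hR : RAdm A R) {a c : A.carrier}
    (hac : comp R R a c) : comp (F R) (comp R (G R)) a c := by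
  obtain ⟨b, hab, hbc⟩ := hac
  refine ⟨tApp A t a b b, (ht R hR a b hab).1, tApp A t b b c, ?_, (ht R hR b c hbc).2⟩
  exact hR.2.eval t _ _ fun j => by fin_cases j; exacts [hab, hR.1 b, hbc]

theorem MalcevMod.le_comp_conv {A : UAAlgebra σ} {F G : Rel A → Rel A} {t : Term σ 3}
    (ht : MalcevMod A F G t) {R : Rel A} (hR : RAdm A R) {a c : A.carrier}
    (hac : R a c) : comp (F R) (comp (conv R) (G R)) a c := by
  refine ⟨tApp A t a c c, (ht R hR a c hac).1, tApp A t a a c, ?_, (ht R hR a c hac).2⟩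
  exact hR.2.eval t _ _ fun j => by fin_cases j; exacts [hR.1 a, hac, hR.1 c]

theorem radm_clRefl (A : UAAlgebra σ) (X : Rel A) : RAdm A (clRefl A X) :=
  ⟨fun a _ hS _ _ => hS a, fun s f g h S hS hcS hXS => hcS s f g fun j => h j S hS hcS hXS⟩

theorem HomProp.apply_of_map_le {E : EqTheory σ}
    {F : ∀ A : UAAlgebra σ, Satisfies A E → Rel A → Rel A}
    (hFhom : HomProp E F) (hFmono : MonotoneOp E F) {B A : UAAlgebra σ}
    {hB : Satisfies B E} (hA : Satisfies A E) (φ : Hom B A) {R : Rel B} {R' : Rel A}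
    (hR : RAdm B R) (hR' : RAdm A R') (hφ : ∀ b c, R b c → R' (φ.toFun b) (φ.toFun c))
    {b c : B.carrier} (h : F B hB R b c) : F A hA R' (φ.toFun b) (φ.toFun c) := by
  have hmap : ∀ x y, mapRel φ R x y → R' x y := fun x y hxy =>
    hxy R' hR'.1 hR'.2 (by rintro _ _ ⟨b, c, hbc, rfl, rfl⟩; exact hφ b c hbc)
  exact hFmono A hA _ R' (radm_clRefl A _) hR' hmap _ _ (hFhom B A hB hA φ R hR b c h)

/-- The compatible relation generated by the pairs `(p i, q i)`. -/
def termRel (B : UAAlgebra σ) {m : ℕ} (p q : Fin m → B.carrier) : Rel B :=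
  fun a b => ∃ w : Term σ m, a = w.eval B p ∧ b = w.eval B q

theorem compatible_termRel (B : UAAlgebra σ) {m : ℕ} (p q : Fin m → B.carrier) :
    Compatible B (termRel B p q) := by
  intro s f g h
  choose w hwf hwg using h
  exact ⟨.op s w, congrArg (B.ops s) (funext hwf), congrArg (B.ops s) (funext hwg)⟩

theorem Hom.map_termRel {B A : UAAlgebra σ} (φ : Hom B A) {m : ℕ} {p q : Fin m → B.carrier}
    {R : Rel A} (hR : Compatible A R) (h : ∀ i, R (φ.toFun (p i)) (φ.toFun (q i)))
    (a b : B.carrier) (hab : termRel B p q a b) : R (φ.toFun a) (φ.toFun b) := by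
  obtain ⟨w, rfl, rfl⟩ := hab
  rw [φ.map_eval, φ.map_eval]
  exact hR.eval w _ _ h

def termSetoid (E : EqTheory σ) (n : ℕ) : Setoid (Term σ n) where
  r s t := ∀ A : UAAlgebra σ, Satisfies A E → ∀ env : Fin n → A.carrier,
    s.eval A env = t.eval A env
  iseqv := ⟨fun _ _ _ _ => rfl, fun h A hA env => (h A hA env).symm,
    fun h₁ h₂ A hA env => (h₁ A hA env).trans (h₂ A hA env)⟩

noncomputable def FreeAlg (E : EqTheory σ) (n : ℕ) : UAAlgebra σ where
  carrier := Quotient (termSetoid E n)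
  ops s f := Quotient.mk _ (.op s fun j => (f j).out)

namespace FreeAlg

variable {E : EqTheory σ} {n : ℕ}

def mk (t : Term σ n) : (FreeAlg E n).carrier := Quotient.mk _ t

def gen (k : Fin n) : (FreeAlg E n).carrier := mk (.var k)

def lift (A : UAAlgebra σ) (hA : Satisfies A E) (env : Fin n → A.carrier) :
    Hom (FreeAlg E n) A where
  toFun := Quotient.lift (s := termSetoid E n) (fun t => t.eval A env)
    fun _ _ h => h A hA env
  map_ops s f := congrArg (A.ops s) <| funext fun j =>
    congrArg (Quotient.lift (s := termSetoid E n) (fun t => t.eval A env) fun _ _ h => h A hA env)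
      (Quotient.out_eq (f j))

theorem eq_of_lift_eq {u v : (FreeAlg E n).carrier}
    (h : ∀ (A : UAAlgebra σ) (hA : Satisfies A E) (env : Fin n → A.carrier),
      (lift A hA env).toFun u = (lift A hA env).toFun v) : u = v := by
  induction u, v using Quotient.inductionOn₂ with
  | h s t => exact Quotient.sound fun A hA env => h A hA env

theorem eval_gen (t : Term σ n) : t.eval (FreeAlg E n) gen = mk t :=
  eq_of_lift_eq fun A hA env => (lift A hA env).map_eval t gen

theorem satisfies : Satisfies (FreeAlg E n) E := fun e he env =>
  eq_of_lift_eq fun A hA env' => by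
    rw [Hom.map_eval, Hom.map_eval]
    exact hA e he _

theorem radm_termRel_gen {m : ℕ} (ρp ρq : Fin m → Fin n) (ι : Fin n → Fin m)
    (hp : ∀ k, ρp (ι k) = k) (hq : ∀ k, ρq (ι k) = k) :
    RAdm (FreeAlg E n) (termRel _ (fun i => gen (ρp i)) (fun i => gen (ρq i))) := by
  refine ⟨fun a => ?_, compatible_termRel _ _ _⟩
  induction a using Quotient.inductionOn with
  | h t =>
    refine ⟨t.rename ι, ?_, ?_⟩ <;>
      simp only [Term.eval_rename, hp, hq, eval_gen] <;> rfl

end FreeAlg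

section FreeAlgebraArgument

variable {E : EqTheory σ} {F G : ∀ A : UAAlgebra σ, Satisfies A E → Rel A → Rel A}

theorem HomProp.apply_lift {m n : ℕ} {ρp ρq : Fin m → Fin n} (hFhom : HomProp E F)
    (hFmono : MonotoneOp E F)
    (hR₀ : RAdm (FreeAlg E n)
      (termRel _ (fun i => FreeAlg.gen (ρp i)) (fun i => FreeAlg.gen (ρq i))))
    {u v : (FreeAlg E n).carrier}
    (h : F _ FreeAlg.satisfies
      (termRel _ (fun i => FreeAlg.gen (ρp i)) (fun i => FreeAlg.gen (ρq i))) u v)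
    {A : UAAlgebra σ} (hA : Satisfies A E) {R : Rel A} (hR : RAdm A R)
    {env : Fin n → A.carrier} (henv : ∀ i, R (env (ρp i)) (env (ρq i))) :
    F A hA R ((FreeAlg.lift A hA env).toFun u) ((FreeAlg.lift A hA env).toFun v) :=
  hFhom.apply_of_map_le hFmono hA _ hR₀ hR ((FreeAlg.lift A hA env).map_termRel hR.2 henv) h

theorem tApp_rename_eq {m : ℕ} {w : Term σ m} {τ : Fin m → Fin 3} {A : UAAlgebra σ}
    {a b c : A.carrier} {env : Fin m → A.carrier} (h : ∀ i, ![a, b, c] (τ i) = env i) :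
    tApp A (w.rename τ) a b c = w.eval A env :=
  (Term.eval_rename τ w A _).trans (congrArg (Term.eval A · w) (funext h))

theorem exists_malcevMod_of_comp_le (hFhom : HomProp E F) (hFmono : MonotoneOp E F)
    (hGhom : HomProp E G) (hGmono : MonotoneOp E G)
    (h : ∀ (A : UAAlgebra σ) (hA : Satisfies A E) (R : Rel A), RAdm A R →
      ∀ a c, comp R R a c → comp (F A hA R) (comp R (G A hA R)) a c) :
    ∃ t : Term σ 3, ∀ (A : UAAlgebra σ) (hA : Satisfies A E),
      MalcevMod A (F A hA) (G A hA) t := by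
  let ρp : Fin 5 → Fin 3 := ![0, 1, 2, 0, 1]
  let ρq : Fin 5 → Fin 3 := ![0, 1, 2, 1, 2]
  have hR₀ := FreeAlg.radm_termRel_gen (E := E) ρp ρq ![0, 1, 2] (by decide) (by decide)
  obtain ⟨_, hxu, _, ⟨w, rfl, rfl⟩, hvz⟩ := h _ FreeAlg.satisfies _ hR₀
    (FreeAlg.gen 0) (FreeAlg.gen 2) ⟨FreeAlg.gen 1, ⟨.var 3, rfl, rfl⟩, ⟨.var 4, rfl, rfl⟩⟩
  refine ⟨w.rename ![0, 1, 2, 0, 2], fun A hA R hR a b hab => ⟨?_, ?_⟩⟩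
  · have hF := hFhom.apply_lift hFmono hR₀ hxu hA hR (env := ![a, b, b]) fun i => by
      fin_cases i; exacts [hR.1 a, hR.1 b, hR.1 b, hab, hR.1 b]
    rw [Hom.map_eval] at hF
    have ht : tApp A (w.rename ![0, 1, 2, 0, 2]) a b b =
        w.eval A fun i => ![a, b, b] (ρp i) :=
      tApp_rename_eq fun i => by fin_cases i <;> rfl
    exact ht ▸ hF
  · have hG := hGhom.apply_lift hGmono hR₀ hvz hA hR (env := ![a, a, b]) fun i => by
      fin_cases i; exacts [hR.1 a, hR.1 a, hR.1 b, hR.1 a, hab]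
    rw [Hom.map_eval] at hG
    have ht : tApp A (w.rename ![0, 1, 2, 0, 2]) a a b =
        w.eval A fun i => ![a, a, b] (ρq i) :=
      tApp_rename_eq fun i => by fin_cases i <;> rfl
    exact ht ▸ hG

theorem exists_malcevMod_of_le_comp_conv (hFhom : HomProp E F) (hFmono : MonotoneOp E F)
    (hGhom : HomProp E G) (hGmono : MonotoneOp E G)
    (h : ∀ (A : UAAlgebra σ) (hA : Satisfies A E) (R : Rel A), RAdm A R →
      ∀ a c, R a c → comp (F A hA R) (comp (conv R) (G A hA R)) a c) :
    ∃ t : Term σ 3, ∀ (A : UAAlgebra σ) (hA : Satisfies A E),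
      MalcevMod A (F A hA) (G A hA) t := by
  let ρp : Fin 3 → Fin 2 := ![0, 1, 0]
  let ρq : Fin 3 → Fin 2 := ![0, 1, 1]
  have hR₀ := FreeAlg.radm_termRel_gen (E := E) ρp ρq ![0, 1] (by decide) (by decide)
  obtain ⟨_, hxu, _, ⟨w, rfl, rfl⟩, hvy⟩ := h _ FreeAlg.satisfies _ hR₀
    (FreeAlg.gen 0) (FreeAlg.gen 1) ⟨.var 2, rfl, rfl⟩
  refine ⟨w.rename ![0, 2, 1], fun A hA R hR a b hab => ?_⟩
  have henv : ∀ i, R (![a, b] (ρp i)) (![a, b] (ρq i)) := fun i => by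
    fin_cases i; exacts [hR.1 a, hR.1 b, hab]
  have hF := hFhom.apply_lift hFmono hR₀ hxu hA hR henv
  have hG := hGhom.apply_lift hGmono hR₀ hvy hA hR henv
  rw [Hom.map_eval] at hF hG
  have htF : tApp A (w.rename ![0, 2, 1]) a b b = w.eval A fun i => ![a, b] (ρq i) :=
    tApp_rename_eq fun i => by fin_cases i <;> rfl
  have htG : tApp A (w.rename ![0, 2, 1]) a a b = w.eval A fun i => ![a, b] (ρp i) :=
    tApp_rename_eq fun i => by fin_cases i <;> rfl
  exact ⟨htF ▸ hF, htG ▸ hG⟩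

end FreeAlgebraArgument

end Paper

theorem stmt18_general {σ : Signature} (E : EqTheory σ)
    (F G : ∀ A : UAAlgebra σ, Satisfies A E → Rel A → Rel A)
    (hFmono : MonotoneOp E F) (hGmono : MonotoneOp E G)
    (hFhom : HomProp E F) (hGhom : HomProp E G) :
    List.TFAE
      [ ∃ t : Term σ 3, ∀ (A : UAAlgebra σ) (hA : Satisfies A E),
          MalcevMod A (F A hA) (G A hA) t,
        ∀ (A : UAAlgebra σ) (hA : Satisfies A E), ∃ t : Term σ 3,
          MalcevMod A (F A hA) (G A hA) t,
        ∀ (A : UAAlgebra σ) (hA : Satisfies A E) (R : Rel A), RAdm A R →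
          ∀ a c, comp R R a c → comp (F A hA R) (comp R (G A hA R)) a c,
        ∀ (A : UAAlgebra σ) (hA : Satisfies A E) (R : Rel A), RAdm A R →
          ∀ a c, R a c → comp (F A hA R) (comp (conv R) (G A hA R)) a c ] := by
  tfae_have 1 → 2 := fun ⟨t, ht⟩ A hA => ⟨t, ht A hA⟩
  tfae_have 2 → 3 := fun h A hA _ hR _ _ hac =>
    (h A hA).elim fun _ ht => ht.comp_le hR hac
  tfae_have 2 → 4 := fun h A hA _ hR _ _ hac =>
    (h A hA).elim fun _ ht => ht.le_comp_conv hR hac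
  tfae_have 3 → 1 := exists_malcevMod_of_comp_le hFhom hFmono hGhom hGmono
  tfae_have 4 → 1 := exists_malcevMod_of_le_comp_conv hFhom hFmono hGhom hGmono
  tfae_finish

/-- Theorem 3: for monotone global operators `F`, `G` with the homomorphism
property on a variety `V`, the following are equivalent:
(1) `V` has a single ternary term Mal'cev modulo `F_A` and `G_A` for every `A ∈ V`;
(2) every `A ∈ V` has a term Mal'cev modulo `F_A` and `G_A`;
(3) `R ∘ R ⊆ F_A(R) ∘ R ∘ G_A(R)` for every `A ∈ V` and reflexive admissible `R`;
(4) `R ⊆ F_A(R) ∘ R⁻ ∘ G_A(R)` for every `A ∈ V` and reflexive admissible `R`. -/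
theorem stmt18 {σ : Signature} (E : EqTheory σ)
    (F G : ∀ A : UAAlgebra σ, Satisfies A E → Rel A → Rel A)
    (hF : GlobalOp E F) (hG : GlobalOp E G)
    (hFmono : MonotoneOp E F) (hGmono : MonotoneOp E G)
    (hFhom : HomProp E F) (hGhom : HomProp E G) :
    List.TFAE
      [ ∃ t : Term σ 3, ∀ (A : UAAlgebra σ) (hA : Satisfies A E),
          MalcevMod A (F A hA) (G A hA) t,
        ∀ (A : UAAlgebra σ) (hA : Satisfies A E), ∃ t : Term σ 3,
          MalcevMod A (F A hA) (G A hA) t,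
        ∀ (A : UAAlgebra σ) (hA : Satisfies A E) (R : Rel A), RAdm A R →
          ∀ a c, comp R R a c → comp (F A hA R) (comp R (G A hA R)) a c,
        ∀ (A : UAAlgebra σ) (hA : Satisfies A E) (R : Rel A), RAdm A R →
          ∀ a c, R a c → comp (F A hA R) (comp (conv R) (G A hA R)) a c ] :=
  stmt18_general E F G hFmono hGmono hFhom hGhom
end
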